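/- If x, y, q, k and n are positive integers with n and q prime, q ≥ 3, gcd(x,y) = 1, y odd, n ≥ 3, and x² − q^(2k) = y^n, then n divides q − 1 and there exists an odd positive integer X such that y = X(X+2) and (X+2)^n − X^n = 2 q^k. -/

import Mathlib

/-!
Write `Q = q ^ k`. The factors of `(x - Q) * (x + Q) = y ^ n` are coprime, so they are `n`-th powers
`a ^ n` and `b ^ n` with `y = a * b`, and `b ^ n - a ^ n = 2 * Q`. Then `b - a` divides `2 * Q`.
If `q` divided `b - a`, lifting the exponent would give `q ^ 2 ∤ (b ^ n - a ^ n) / (b - a)`, so this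
quotient would divide `2 * q` although it is at least `b ^ 2 > 2 * q`. Hence `b - a ∣ 2`, and
`b = a + 2` since `a` and `b` are odd. Finally `(a + 2) / a` has order `n` in `(ZMod q)ˣ`, so
`n ∣ q - 1`.
-/

theorem dvd_mul_of_dvd_mul_pow_of_not_sq_dvd {R : Type*} [CommRing R] [IsDomain R] [IsBezout R]
    {p s m : R} {k : ℕ} (hp : Prime p) (h : s ∣ m * p ^ k) (hs : ¬p ^ 2 ∣ s) : s ∣ m * p := by
  by_cases hps : p ∣ s
  · obtain ⟨t, rfl⟩ := hps
    have hpt : IsCoprime t p :=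
      ((hp.coprime_iff_not_dvd).mpr fun hpt => hs (by rw [sq]; exact mul_dvd_mul_left p hpt)).symm
    refine mul_comm m p ▸ mul_dvd_mul_left p ?_
    rcases k with _ | j
    · exact (dvd_mul_left t p).trans (by simpa using h)
    · rw [pow_succ, ← mul_assoc, mul_comm _ p] at h
      exact (hpt.pow_right (n := j)).dvd_of_dvd_mul_right
        ((mul_dvd_mul_iff_left hp.ne_zero).mp h)
  · exact (((hp.coprime_iff_not_dvd).mpr hps).symm.pow_right.dvd_of_dvd_mul_right h).mul_right p

theorem FiniteField.dvd_card_sub_one_of_pow_eq_pow {K : Type*} [Field K] [Fintype K] {n : ℕ}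
    (hn : n.Prime) {a b : K} (hb : b ≠ 0) (hab : a ≠ b) (h : a ^ n = b ^ n) :
    n ∣ Fintype.card K - 1 := by
  have ht : (a / b) ^ n = 1 := by rw [div_pow, h, div_self (pow_ne_zero n hb)]
  have horder : orderOf (a / b) = n :=
    ((hn.eq_one_or_self_of_dvd _ (orderOf_dvd_of_pow_eq_one ht)).resolve_left
      (by rw [orderOf_eq_one_iff, div_eq_one_iff_eq hb]; exact hab))
  rw [← horder]
  refine orderOf_dvd_of_pow_eq_one (FiniteField.pow_card_sub_one_eq_one _ ?_)
  exact div_ne_zero (fun ha => pow_ne_zero n hb (by rw [← h, ha, zero_pow hn.ne_zero])) hb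

namespace Int

theorem isCoprime_sub_add_of_mul_eq_pow {x y Q : ℤ} {n : ℕ} (hxy : IsCoprime x y) (hy : Odd y)
    (h : (x - Q) * (x + Q) = y ^ n) : IsCoprime (x - Q) (x + Q) := by
  have hdvd : x - Q ∣ y ^ n := ⟨x + Q, h.symm⟩
  have hx : IsCoprime (x - Q) x := hxy.symm.pow_left.of_isCoprime_of_dvd_left hdvd
  have h2 : IsCoprime (x - Q) 2 := (isCoprime_two_right.mpr hy.pow).of_isCoprime_of_dvd_left hdvd
  have := (h2.mul_right hx).add_mul_left_right (-1)
  rwa [show 2 * x + (x - Q) * -1 = x + Q by ring] at this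

theorem exists_pow_eq_sub_add_of_sq_sub_sq_eq_pow {x y Q : ℤ} {n : ℕ} (hxy : IsCoprime x y)
    (hy : Odd y) (hn : Odd n) (h : x ^ 2 - Q ^ 2 = y ^ n) :
    ∃ a b : ℤ, x - Q = a ^ n ∧ x + Q = b ^ n ∧ a * b = y := by
  have hfac : (x - Q) * (x + Q) = y ^ n := by rw [← h]; ring
  obtain ⟨⟨a, ha⟩, ⟨b, hb⟩⟩ :=
    eq_pow_of_mul_eq_pow_odd (isCoprime_sub_add_of_mul_eq_pow hxy hy hfac) hn hfac
  refine ⟨a, b, ha, hb, hn.pow_injective ?_⟩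
  simp only [mul_pow, ← ha, ← hb, hfac]

theorem not_sq_dvd_geom_sum₂ {p n : ℕ} (hp : p.Prime) (hp2 : Odd p) (hn : n.Prime) {x y : ℤ}
    (hxy : (p : ℤ) ∣ x - y) (hx : ¬(p : ℤ) ∣ x) :
    ¬(p : ℤ) ^ 2 ∣ ∑ i ∈ Finset.range n, x ^ i * y ^ (n - 1 - i) := by
  have hpZ : Prime (p : ℤ) := Nat.prime_iff_prime_int.mp hp
  -- The sum has `p`-adic valuation exactly one if `p = n`, and zero otherwise.
  by_cases hpn : p = n
  · subst hpn
    intro hsq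
    have := (emultiplicity_geom_sum₂_eq_one hpZ hp2 hxy hx).symm ▸ le_emultiplicity_of_pow_dvd hsq
    norm_num at this
  · have hpn' : ¬(p : ℤ) ∣ (n : ℤ) := by
      rw [Int.natCast_dvd_natCast, Nat.prime_dvd_prime_iff_eq hp hn]
      exact hpn
    exact fun hsq => not_dvd_geom_sum₂ hpZ hxy hx hpn' ((dvd_pow_self _ two_ne_zero).trans hsq)

theorem eq_add_two_of_pow_sub_pow_eq {p n k : ℕ} (hp : p.Prime) (hp2 : Odd p) (hn : n.Prime)
    (hn3 : 3 ≤ n) {a b : ℤ} (ha : 0 < a) (ha_odd : Odd a) (hb_odd : Odd b) (hpb : ¬(p : ℤ) ∣ b)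
    (h : b ^ n - a ^ n = 2 * p ^ k) : b = a + 2 := by
  have hpZ : Prime (p : ℤ) := Nat.prime_iff_prime_int.mp hp
  set S := ∑ i ∈ Finset.range n, b ^ i * a ^ (n - 1 - i)
  have hfac : S * (b - a) = 2 * p ^ k := (geom_sum₂_mul b a n).trans h
  have hab : a < b := (hn.odd_of_ne_two (by omega)).pow_lt_pow.mp (by
    have : (0 : ℤ) < 2 * p ^ k := by have := hp.pos; positivity
    linarith)
  have hb : 0 < b := ha.trans hab
  have hbS : b ^ 2 ≤ S := calc
    b ^ 2 ≤ b ^ (n - 1) := pow_le_pow_right₀ (by omega : (1 : ℤ) ≤ b) (by omega)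
    _ = b ^ (n - 1) * a ^ (n - 1 - (n - 1)) := by simp
    _ ≤ S := Finset.single_le_sum (f := fun i => b ^ i * a ^ (n - 1 - i)) (fun i _ => by positivity)
      (Finset.mem_range.mpr (show n - 1 < n by omega))
  have hpba : ¬(p : ℤ) ∣ b - a := by
    intro hdvd
    have hS : S ∣ 2 * p := dvd_mul_of_dvd_mul_pow_of_not_sq_dvd hpZ (Dvd.intro _ hfac)
      (not_sq_dvd_geom_sum₂ hp hp2 hn hdvd hpb)
    have hpba : (p : ℤ) ≤ b - a := Int.le_of_dvd (by omega) hdvd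
    have hSp : S ≤ 2 * p := Int.le_of_dvd (by have := hp.two_le; omega) hS
    nlinarith
  have hcop : IsCoprime (b - a) (p ^ k) := (hpZ.coprime_iff_not_dvd.mpr hpba).symm.pow_right
  have h2 : b - a ∣ 2 := hcop.dvd_of_dvd_mul_right (Dvd.intro_left _ hfac)
  have := Int.le_of_dvd two_pos h2
  obtain ⟨r, rfl⟩ := ha_odd
  obtain ⟨s, rfl⟩ := hb_odd
  omega

theorem dvd_sub_one_of_add_two_pow_sub_pow_eq {q n k : ℕ} (hq : q.Prime) (hq2 : q ≠ 2)
    (hn : n.Prime) (hk : k ≠ 0) {a : ℤ} (h : (a + 2) ^ n - a ^ n = 2 * q ^ k) : n ∣ q - 1 := by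
  have := Fact.mk hq
  have h2 : (2 : ZMod q) ≠ 0 := Ring.two_ne_zero (by rwa [ZMod.ringChar_zmod_n])
  have hpow : ((a : ZMod q) + 2) ^ n = (a : ZMod q) ^ n := by
    have := congrArg (Int.cast : ℤ → ZMod q) h
    push_cast at this
    rwa [ZMod.natCast_self, zero_pow hk, mul_zero, sub_eq_zero] at this
  rw [← ZMod.card q]
  refine FiniteField.dvd_card_sub_one_of_pow_eq_pow hn (fun ha => h2 ?_) (by simpa using h2) hpow
  rw [ha, zero_add, zero_pow hn.ne_zero] at hpow
  exact (pow_eq_zero_iff hn.ne_zero).mp hpow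

end Int

theorem prime_power_gaps_even_odd_structure_general (x y q k n : ℕ)
    (hk : 0 < k)
    (hn : 3 ≤ n) (hnp : Nat.Prime n) (hqp : Nat.Prime q) (hq3 : 3 ≤ q)
    (hgcd : Nat.gcd x y = 1) (hyodd : Odd y)
    (heq : (x : ℤ) ^ 2 - (q : ℤ) ^ (2 * k) = (y : ℤ) ^ n) :
    n ∣ q - 1 ∧ ∃ X : ℕ, 0 < X ∧ Odd X ∧ y = X * (X + 2) ∧
      ((X : ℤ) + 2) ^ n - (X : ℤ) ^ n = 2 * (q : ℤ) ^ k := by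
  have hnodd : Odd n := hnp.odd_of_ne_two (by omega)
  have hqZ : Prime (q : ℤ) := Nat.prime_iff_prime_int.mp hqp
  have hyZ : Odd (y : ℤ) := by exact_mod_cast hyodd
  have hcop : IsCoprime (x : ℤ) y := Nat.isCoprime_iff_coprime.mpr hgcd
  have hqy : ¬(q : ℤ) ∣ y := fun hqy => by
    have hqx : (q : ℤ) ∣ x := hqZ.dvd_of_dvd_pow (n := 2) <| by
      rw [sub_eq_iff_eq_add.mp heq]
      exact dvd_add (dvd_pow hqy (by omega)) (dvd_pow_self _ (by omega))
    exact hqZ.not_isUnit (hcop.isUnit_of_dvd' hqx hqy)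
  obtain ⟨a, b, hxa, hxb, hab⟩ := Int.exists_pow_eq_sub_add_of_sq_sub_sq_eq_pow hcop hyZ hnodd
    (Q := q ^ k) (by rwa [← pow_mul, mul_comm])
  have hgap : b ^ n - a ^ n = 2 * q ^ k := by rw [← hxa, ← hxb]; ring
  have hb : 0 < b := hnodd.pow_pos_iff.mp (by rw [← hxb]; positivity)
  have ha : 0 < a := pos_of_mul_pos_left (by have := hyodd.pos; omega) hb.le
  have hodd := Int.odd_mul.mp (hab ▸ hyZ)
  have hba : b = a + 2 := Int.eq_add_two_of_pow_sub_pow_eq hqp (hqp.odd_of_ne_two (by omega))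
    hnp hn ha hodd.1 hodd.2 (fun hqb => hqy (hab ▸ hqb.mul_left a)) hgap
  subst hba
  lift a to ℕ using ha.le
  exact ⟨Int.dvd_sub_one_of_add_two_pow_sub_pow_eq hqp (by omega) hnp hk.ne' hgap, a,
    by exact_mod_cast ha, by exact_mod_cast hodd.1, by exact_mod_cast hab.symm, hgap⟩

theorem prime_power_gaps_even_odd_structure (x y q k n : ℕ)
    (hx : 0 < x) (hy : 0 < y) (hk : 0 < k)
    (hn : 3 ≤ n) (hnp : Nat.Prime n) (hqp : Nat.Prime q) (hq3 : 3 ≤ q)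
    (hgcd : Nat.gcd x y = 1) (hyodd : Odd y)
    (heq : (x : ℤ) ^ 2 - (q : ℤ) ^ (2 * k) = (y : ℤ) ^ n) :
    n ∣ q - 1 ∧ ∃ X : ℕ, 0 < X ∧ Odd X ∧ y = X * (X + 2) ∧
      ((X : ℤ) + 2) ^ n - (X : ℤ) ^ n = 2 * (q : ℤ) ^ k :=
  prime_power_gaps_even_odd_structure_general x y q k n hk hn hnp hqp hq3 hgcd hyodd heq
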